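/- arXiv:math/0102125 — 5 statements merged into one kernel-verified Lean document; each statement's English description precedes it below -/
import Mathlib

section
/- Let p be a prime with p ≥ 5 and let f be a squarefree polynomial of degree 3 over F_p. Then there exists a point (x,y) ∈ F_p × F_p with y² = f(x). -/
open Polynomial in
/-- Every genus-1 curve `y² = f(x)` with `f` squarefree of degree 3 over `F_p`
has an affine `F_p`-rational point for every prime `p ≥ 5`. -/
theorem genus_one_has_point (p : ℕ) (hp : p.Prime) (hge : 5 ≤ p)
    (f : Polynomial (ZMod p)) (hdeg : f.natDegree = 3) (hsf : Squarefree f) :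
    ∃ x y : ZMod p, y ^ 2 = f.eval x := by
  by_contra hcon
  push_neg at hcon
  haveI : Fact p.Prime := ⟨hp⟩
  set n := p / 2 with hn
  have hodd : p % 2 = 1 := Nat.odd_iff.mp (hp.odd_of_ne_two (by omega))
  have hpn : p = 2 * n + 1 := by omega
  have hn2 : 2 ≤ n := by omega
  have hf0 : f ≠ 0 := fun h => by simp [h] at hdeg
  -- every value of f is a nonzero nonsquare
  have hval : ∀ x : ZMod p, (f.eval x) ^ n = -1 := by
    intro x
    have hne : f.eval x ≠ 0 := fun h => hcon x 0 (by simp [h])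
    have hns : ¬ IsSquare (f.eval x) := by
      rintro ⟨r, hr⟩
      exact hcon x r (by rw [hr, sq])
    rcases ZMod.pow_div_two_eq_neg_one_or_one p hne with h | h
    · exact absurd ((ZMod.euler_criterion p hne).mpr h) hns
    · exact h
  set P : Polynomial (ZMod p) := f ^ n + 1 with hP
  have hfpow : (f ^ n).natDegree = 3 * n := by rw [natDegree_pow, hdeg, mul_comm]
  have hPdeg : P.natDegree ≤ 3 * n := by
    calc P.natDegree ≤ max (f ^ n).natDegree (1 : (ZMod p)[X]).natDegree :=
          natDegree_add_le _ _
      _ ≤ 3 * n := by rw [hfpow, natDegree_one]; omega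
  have hPne : P ≠ 0 := by
    intro h
    have h2 : P.coeff (3 * n) = (f.leadingCoeff) ^ n := by
      rw [hP, coeff_add, coeff_one, if_neg (by positivity), ← hfpow, coeff_natDegree,
        leadingCoeff_pow]
      ring
    rw [h] at h2
    simp only [coeff_zero] at h2
    exact (pow_ne_zero n (leadingCoeff_ne_zero.mpr hf0)) h2.symm
  -- X^p - X divides P
  have hcard : Fintype.card (ZMod p) = p := ZMod.card p
  set T : Polynomial (ZMod p) := X ^ p - X with hT
  have hTroots : T.roots = Finset.univ.val := by
    have := FiniteField.roots_X_pow_card_sub_X (ZMod p)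
    rwa [hcard] at this
  have hTmonic : T.Monic :=
    (monic_X_pow p).sub_of_left (by
      rw [degree_X_pow, degree_X]; exact_mod_cast (by omega : (1:ℕ) < p))
  have hTdeg : T.natDegree = p := FiniteField.X_pow_card_sub_X_natDegree_eq _ (by omega)
  have hTprod : ((Finset.univ.val : Multiset (ZMod p)).map fun a => X - C a).prod = T := by
    rw [← hTroots]
    exact prod_multiset_X_sub_C_of_monic_of_roots_card_eq hTmonic (by
      rw [hTroots, hTdeg]; simp [hcard])
  have hdvd : T ∣ P := by
    rw [← hTprod]
    rw [Multiset.prod_X_sub_C_dvd_iff_le_roots hPne]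
    refine Multiset.le_iff_count.2 fun a => ?_
    have ha : a ∈ P.roots := by
      rw [mem_roots hPne]
      show P.eval a = 0
      simp [hP, hval a]
    calc Multiset.count a Finset.univ.val = 1 := Multiset.count_univ a
      _ ≤ Multiset.count a P.roots := Multiset.one_le_count_iff_mem.mpr ha
  obtain ⟨Q, hQ⟩ := hdvd
  have hQne : Q ≠ 0 := fun h => hPne (by rw [hQ, h, mul_zero])
  have hTne : T ≠ 0 := hTmonic.ne_zero
  have hQdeg : Q.natDegree ≤ n - 1 := by
    have : P.natDegree = p + Q.natDegree := by
      rw [hQ, natDegree_mul hTne hQne, hTdeg]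
    omega
  -- differentiate
  have hder : C (n : ZMod p) * f ^ (n - 1) * derivative f = -Q + T * derivative Q := by
    have h1 : derivative P = derivative (T * Q) := by rw [hQ]
    rw [hP, hT] at h1
    rw [derivative_add, derivative_pow, derivative_one, add_zero] at h1
    rw [derivative_mul, derivative_sub, derivative_X_pow, derivative_X] at h1
    have hc : (C (p : ZMod p)) = 0 := by
      rw [ZMod.natCast_self, map_zero]
    rw [hc] at h1
    rw [h1]; ring
  have hfF : f ^ (n - 1) * f = f ^ n := by
    rw [← pow_succ]; congr 1; omega
  have hmain : f * Q - C (n : ZMod p) * derivative f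
      = T * (f * derivative Q - C (n : ZMod p) * Q * derivative f) := by
    have hA : f ^ n + 1 = T * Q := hQ
    linear_combination (-(C (n : ZMod p) * derivative f)) * hA + f * hder
      + (-(C (n : ZMod p) * derivative f)) * hfF
  have hS : f * derivative Q - C (n : ZMod p) * Q * derivative f = 0 := by
    by_contra hS
    have hdegR : p ≤ (T * (f * derivative Q - C (n : ZMod p) * Q * derivative f)).natDegree := by
      rw [natDegree_mul hTne hS, hTdeg]; omega
    rw [← hmain] at hdegR
    have hL : (f * Q - C (n : ZMod p) * derivative f).natDegree ≤ n + 2 := by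
      refine le_trans (natDegree_sub_le _ _) (max_le ?_ ?_)
      · rw [natDegree_mul hf0 hQne, hdeg]; omega
      · refine le_trans (natDegree_mul_le) ?_
        have := natDegree_derivative_le f
        simp only [natDegree_C, zero_add]
        omega
    omega
  rw [hS, mul_zero, sub_eq_zero] at hmain
  -- contradiction on degrees
  have : 3 ≤ (f * Q).natDegree := by rw [natDegree_mul hf0 hQne, hdeg]; omega
  rw [hmain] at this
  have h2 : (C (n : ZMod p) * derivative f).natDegree ≤ 2 := by
    refine le_trans natDegree_mul_le ?_
    have := natDegree_derivative_le f
    simp only [natDegree_C, zero_add]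
    omega
  omega
end

section
/- Let p be a prime with p ≥ 31 and let f be a squarefree monic polynomial of degree 7 over F_p. Then there exists a point (x,y) ∈ F_p × F_p with y² = f(x); that is, every hyperelliptic curve of genus 3 over F_p has an affine F_p-rational point for all primes p ≥ 31. -/
open Polynomial

/-- The key algebraic induction step of the Stepanov/Mit'kin argument. -/
private lemma mitkin_step {K : Type*} [CommRing K] (T g u q W : K[X]) (k a : K)
    (hT : derivative T = -1)
    (hC : T * q = C k * (g * u) + W)
    (hq : q = g * derivative u - C a * derivative g * u) :
    T * (g * derivative q - C (a + 1) * derivative g * q)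
      = C (k + 1) * (g * q) + (g * derivative W - C (a + 1) * derivative g * W) := by
  have h3 := congrArg derivative hC
  simp only [derivative_mul, derivative_add, derivative_C, zero_mul, zero_add, hT] at h3
  simp only [C_add, C_1]
  linear_combination g * h3 - ((C a + 1) * derivative g) * hC - (C k * g) * hq

/-- Mod-`f` structure of the auxiliary polynomials `W`. -/
private lemma mitkin_Wstep {K : Type*} [CommRing K] (f g' W r : K[X]) (b c : K) (n : ℕ)
    (hW : W = C c * g' ^ n + f * r) :
    f * derivative W - C b * g' * W
      = C (-(b * c)) * g' ^ (n + 1) + f * (derivative W - C b * g' * r) := by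
  simp only [map_neg, map_mul]
  linear_combination (-(C b * g')) * hW

/-- (Via Mit'kin's bound.) Every hyperelliptic curve of genus 3, `y² = f(x)` with `f`
squarefree monic of degree 7 over `F_p`, has an affine `F_p`-rational point for every
prime `p ≥ 31`. -/
theorem genus_three_has_point_mitkin (p : ℕ) (hp : p.Prime) (hge : 31 ≤ p)
    (f : Polynomial (ZMod p)) (hmonic : f.Monic) (hdeg : f.natDegree = 7)
    (hsf : Squarefree f) :
    ∃ x y : ZMod p, y ^ 2 = f.eval x := by
  haveI : Fact p.Prime := ⟨hp⟩
  by_contra hcon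
  push_neg at hcon
  -- every value of f is a nonzero non-square, hence f(a)^(p/2) = -1
  have hodd : p % 2 = 1 := Nat.odd_iff.mp (hp.odd_of_ne_two (by omega))
  set m := p / 2 with hmdef
  have hm : 2 * m + 1 = p := by omega
  have hval : ∀ a : ZMod p, (f.eval a) ^ m = -1 := by
    intro a
    have hne : f.eval a ≠ 0 := by
      intro h; exact hcon a 0 (by simp [h])
    have hnsq : ¬ IsSquare (f.eval a) := by
      rintro ⟨y, hy⟩
      exact hcon a y (by rw [sq]; exact hy.symm)
    have h1 : (f.eval a) ^ m ≠ 1 := fun h => hnsq ((ZMod.euler_criterion p hne).mpr h)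
    have h2 : ((f.eval a) ^ m) * ((f.eval a) ^ m) = 1 := by
      rw [← pow_add]
      have hmm : m + m = p - 1 := by omega
      rw [hmm]
      exact ZMod.pow_card_sub_one_eq_one hne
    rcases mul_self_eq_one_iff.mp h2 with h | h
    · exact absurd h h1
    · exact h
  -- T = X^p - X divides f^m + 1
  set T : (ZMod p)[X] := X ^ p - X with hTdef
  have hT' : derivative T = -1 := by
    simp [hTdef, derivative_X_pow, ZMod.natCast_self]
  have hTmonic : T.Monic := by
    refine monic_X_pow_sub ?_
    rw [degree_X]
    exact_mod_cast hp.one_lt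
  have hTne : T ≠ 0 := hTmonic.ne_zero
  have hTdeg : T.natDegree = p := FiniteField.X_pow_card_sub_X_natDegree_eq (ZMod p) hp.one_lt
  have hprodmonic : (∏ a : ZMod p, (X - C a)).Monic :=
    monic_prod_of_monic _ _ fun a _ => monic_X_sub_C a
  have hproddeg : (∏ a : ZMod p, (X - C a)).natDegree = p := by
    rw [natDegree_prod _ _ fun a _ => X_sub_C_ne_zero a]
    simp [ZMod.card]
  have hTeq : (∏ a : ZMod p, (X - C a)) = T := by
    refine (eq_of_monic_of_dvd_of_natDegree_le hprodmonic hTmonic ?_ ?_).symm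
    · refine Finset.prod_dvd_of_coprime ?_ ?_
      · intro a _ b _ hab
        exact pairwise_coprime_X_sub_C (Function.injective_id) hab
      · intro a _
        rw [dvd_iff_isRoot]
        simp [IsRoot, hTdef, ZMod.pow_card]
    · rw [hTdeg, hproddeg]
  have hdvd : T ∣ f ^ m + 1 := by
    rw [← hTeq]
    refine Finset.prod_dvd_of_coprime ?_ ?_
    · intro a _ b _ hab
      exact pairwise_coprime_X_sub_C (Function.injective_id) hab
    · intro a _
      rw [dvd_iff_isRoot]
      simp [IsRoot, hval a]
  obtain ⟨q0, hF⟩ := hdvd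
  -- degree of q0
  have hFdeg : (f ^ m + 1).natDegree = 7 * m := by
    have : (f ^ m + C 1).natDegree = (f ^ m).natDegree := natDegree_add_C
    rw [map_one] at this
    rw [this, hmonic.natDegree_pow, hdeg]; ring
  have hq0ne : q0 ≠ 0 := by
    intro h
    rw [h, mul_zero] at hF
    have := hFdeg
    rw [hF] at this
    simp at this
    omega
  have hd0 : p + q0.natDegree = 7 * m := by
    have h1 : (T * q0).natDegree = T.natDegree + q0.natDegree := natDegree_mul hTne hq0ne
    rw [← hF, hFdeg, hTdeg] at h1
    omega
  -- the chain of polynomials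
  have hm1 : 1 ≤ m := by omega
  set m' := m - 1 with hm'def
  have hm' : m = m' + 1 := by omega
  set μ : ZMod p := ((m : ℕ) : ZMod p) with hμdef
  set q1 := f * derivative q0 - C μ * derivative f * q0 with hq1def
  set W1 := C (-μ) * derivative f with hW1def
  set q2 := f * derivative q1 - C (μ + 1) * derivative f * q1 with hq2def
  set W2 := f * derivative W1 - C (μ + 1) * derivative f * W1 with hW2def
  set q3 := f * derivative q2 - C (μ + 1 + 1) * derivative f * q2 with hq3def
  set W3 := f * derivative W2 - C (μ + 1 + 1) * derivative f * W2 with hW3def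
  set q4 := f * derivative q3 - C (μ + 1 + 1 + 1) * derivative f * q3 with hq4def
  set W4 := f * derivative W3 - C (μ + 1 + 1 + 1) * derivative f * W3 with hW4def
  -- base identity C1
  have hF' : f ^ (m' + 1) + 1 = T * q0 := by rw [← hm']; exact hF
  have hC1 : T * q1 = C 1 * (f * q0) + W1 := by
    have h3 := congrArg derivative hF'
    simp only [derivative_add, derivative_one, add_zero, derivative_pow,
      Nat.add_sub_cancel, derivative_mul, hT'] at h3
    have hcast : ((m' + 1 : ℕ) : ZMod p) = μ := by rw [hμdef, hm']
    rw [hcast] at h3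
    have hfm : f ^ (m' + 1) + 1 = f ^ m' * f + 1 := by ring
    rw [hfm] at hF'
    rw [hq1def, hW1def]
    simp only [map_one, map_neg]
    linear_combination (-f) * h3 + (C μ * derivative f) * hF'
  -- iterated identities via the step lemma
  have hC2 : T * q2 = C (1 + 1) * (f * q1) + W2 :=
    mitkin_step T f q0 q1 W1 1 μ hT' hC1 hq1def
  have hC3 : T * q3 = C (1 + 1 + 1) * (f * q2) + W3 :=
    mitkin_step T f q1 q2 W2 (1 + 1) (μ + 1) hT' hC2 hq2def
  have hC4 : T * q4 = C (1 + 1 + 1 + 1) * (f * q3) + W4 :=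
    mitkin_step T f q2 q3 W3 (1 + 1 + 1) (μ + 1 + 1) hT' hC3 hq3def
  -- degree bounds for the W's
  have hg'deg : (derivative f).natDegree ≤ 6 := by
    have := natDegree_derivative_le f
    omega
  have hWstep : ∀ (b : ZMod p) (W : (ZMod p)[X]) (w : ℕ), 1 ≤ w → W.natDegree ≤ w →
      (f * derivative W - C b * derivative f * W).natDegree ≤ w + 6 := by
    intro b W w hw hW
    refine (natDegree_sub_le _ _).trans (max_le ?_ ?_)
    · refine (natDegree_mul_le).trans ?_
      have h1 := natDegree_derivative_le W
      omega
    · refine (natDegree_mul_le).trans ?_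
      have h1 : (C b * derivative f).natDegree ≤ 6 :=
        (natDegree_mul_le).trans (by simp [hg'deg])
      omega
  have hW1deg : W1.natDegree ≤ 6 := by
    rw [hW1def]
    exact (natDegree_mul_le).trans (by simp [hg'deg])
  have hW2deg : W2.natDegree ≤ 12 := by
    rw [hW2def]; exact hWstep _ _ 6 (by norm_num) hW1deg
  have hW3deg : W3.natDegree ≤ 18 := by
    rw [hW3def]; exact hWstep _ _ 12 (by norm_num) hW2deg
  have hW4deg : W4.natDegree ≤ 24 := by
    rw [hW4def]; exact hWstep _ _ 18 (by norm_num) hW3deg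
  -- degree bound helper for the RHS of the C identities
  have hRHS : ∀ (k : ZMod p) (u W : (ZMod p)[X]) (n w : ℕ), u.natDegree ≤ n →
      W.natDegree ≤ w → (C k * (f * u) + W).natDegree ≤ max (7 + n) w := by
    intro k u W n w hu hW
    refine (natDegree_add_le _ _).trans (max_le_max ?_ hW)
    refine (natDegree_mul_le).trans ?_
    have h2 := natDegree_mul_le (p := f) (q := u)
    simp only [natDegree_C]
    omega
  -- helper: an identity T * q = r with deg r < p forces q = 0 and r = 0
  have hTkill : ∀ (q r : (ZMod p)[X]), T * q = r → r.natDegree < p → q = 0 ∧ r = 0 := by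
    intro q r h hr
    rcases eq_or_ne q 0 with h0 | h0
    · exact ⟨h0, by rw [← h, h0, mul_zero]⟩
    · exfalso
      have h1 : (T * q).natDegree = T.natDegree + q.natDegree := natDegree_mul hTne h0
      rw [h, hTdeg] at h1
      omega
  -- bound the degree of q3
  have hn3 : q3.natDegree ≤ 2 := by
    by_cases h1 : q1 = 0
    · have hz2 : q2 = 0 := by
        refine (hTkill q2 _ hC2 ?_).1
        have : (C (1+1) * (f * q1) + W2).natDegree ≤ max (7 + 0) 12 :=
          hRHS _ _ _ 0 12 (by simp [h1]) hW2deg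
        omega
      have hz3 : q3 = 0 := by
        refine (hTkill q3 _ hC3 ?_).1
        have : (C (1+1+1) * (f * q2) + W3).natDegree ≤ max (7 + 0) 18 :=
          hRHS _ _ _ 0 18 (by simp [hz2]) hW3deg
        omega
      simp [hz3]
    · have hb1 : p + q1.natDegree ≤ max (7 + q0.natDegree) 6 := by
        have he : (T * q1).natDegree = T.natDegree + q1.natDegree := natDegree_mul hTne h1
        rw [hC1, hTdeg] at he
        rw [← he]
        exact hRHS _ _ _ _ _ le_rfl hW1deg
      by_cases h2 : q2 = 0
      · have hz3 : q3 = 0 := by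
          refine (hTkill q3 _ hC3 ?_).1
          have : (C (1+1+1) * (f * q2) + W3).natDegree ≤ max (7 + 0) 18 :=
            hRHS _ _ _ 0 18 (by simp [h2]) hW3deg
          omega
        simp [hz3]
      · have hb2 : p + q2.natDegree ≤ max (7 + q1.natDegree) 12 := by
          have he : (T * q2).natDegree = T.natDegree + q2.natDegree := natDegree_mul hTne h2
          rw [hC2, hTdeg] at he
          rw [← he]
          exact hRHS _ _ _ _ _ le_rfl hW2deg
        by_cases h3 : q3 = 0
        · simp [h3]
        · have hb3 : p + q3.natDegree ≤ max (7 + q2.natDegree) 18 := by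
            have he : (T * q3).natDegree = T.natDegree + q3.natDegree := natDegree_mul hTne h3
            rw [hC3, hTdeg] at he
            rw [← he]
            exact hRHS _ _ _ _ _ le_rfl hW3deg
          omega
  -- kill q4 : the right-hand side of C4 is identically zero
  have hzero : C (1+1+1+1) * (f * q3) + W4 = 0 := by
    refine (hTkill q4 _ hC4 ?_).2
    have : (C (1+1+1+1) * (f * q3) + W4).natDegree ≤ max (7 + 2) 24 :=
      hRHS _ _ _ 2 24 hn3 hW4deg
    omega
  -- the mod-f structure of W4
  have hW1dec : W1 = C (-μ) * (derivative f) ^ 1 + f * 0 := by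
    rw [hW1def]; ring
  have hW2dec : W2 = C (-((μ+1) * -μ)) * (derivative f) ^ 2
      + f * (derivative W1 - C (μ+1) * derivative f * 0) := by
    rw [hW2def]; exact mitkin_Wstep f (derivative f) W1 0 (μ+1) (-μ) 1 hW1dec
  have hW3dec : W3 = C (-((μ+1+1) * -((μ+1) * -μ))) * (derivative f) ^ 3
      + f * (derivative W2 - C (μ+1+1) * derivative f
          * (derivative W1 - C (μ+1) * derivative f * 0)) := by
    rw [hW3def]; exact mitkin_Wstep f (derivative f) W2 _ (μ+1+1) _ 2 hW2dec
  have hW4dec : W4 = C (-((μ+1+1+1) * -((μ+1+1) * -((μ+1) * -μ)))) * (derivative f) ^ 4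
      + f * (derivative W3 - C (μ+1+1+1) * derivative f
          * (derivative W2 - C (μ+1+1) * derivative f
            * (derivative W1 - C (μ+1) * derivative f * 0))) := by
    rw [hW4def]; exact mitkin_Wstep f (derivative f) W3 _ (μ+1+1+1) _ 3 hW3dec
  -- deduce f ∣ c * (f')^4 with c ≠ 0
  have hc4 : -((μ+1+1+1) * -((μ+1+1) * -((μ+1) * -μ))) = μ * (μ+1) * (μ+2) * (μ+3) := by ring
  rw [hc4] at hW4dec
  have hfactor : ∀ j : ℕ, j ≤ 3 → (μ + (j : ZMod p)) ≠ 0 := by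
    intro j hj h
    have hcast : ((m + j : ℕ) : ZMod p) = 0 := by push_cast; rw [← hμdef]; exact h
    rw [ZMod.natCast_eq_zero_iff] at hcast
    have hlt : m + j < p := by omega
    have hpos : 0 < m + j := by omega
    exact absurd (Nat.le_of_dvd hpos hcast) (by omega)
  have hc4ne : μ * (μ+1) * (μ+2) * (μ+3) ≠ 0 := by
    have h0 := hfactor 0 (by norm_num)
    have h1 := hfactor 1 (by norm_num)
    have h2 := hfactor 2 (by norm_num)
    have h3 := hfactor 3 (by norm_num)
    push_cast at h0 h1 h2 h3
    simp only [add_zero] at h0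
    exact mul_ne_zero (mul_ne_zero (mul_ne_zero h0 h1) h2) h3
  have hfdvd : f ∣ C (μ * (μ+1) * (μ+2) * (μ+3)) * (derivative f) ^ 4 := by
    refine ⟨-(C (1+1+1+1) * q3) - (derivative W3 - C (μ+1+1+1) * derivative f
          * (derivative W2 - C (μ+1+1) * derivative f
            * (derivative W1 - C (μ+1) * derivative f * 0))), ?_⟩
    linear_combination hzero - hW4dec
  have hfdvd' : f ∣ (derivative f) ^ 4 := by
    have h := hfdvd.mul_left (C (μ * (μ+1) * (μ+2) * (μ+3))⁻¹)
    rwa [← mul_assoc, ← C_mul, inv_mul_cancel₀ hc4ne, C_1, one_mul] at h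
  -- contradiction with squarefreeness
  have hsep : f.Separable := PerfectField.separable_iff_squarefree.mpr hsf
  have hcop : IsCoprime f ((derivative f) ^ 4) := hsep.pow_right
  have hunit : IsUnit f := hcop.isUnit_of_dvd' dvd_rfl hfdvd'
  have := natDegree_eq_zero_of_isUnit hunit
  omega
end

section
/- Let p be a prime with p ≥ 53 and let f be a squarefree monic polynomial of degree 9 over F_p. Then there exists a point (x,y) ∈ F_p × F_p with y² = f(x); that is, every hyperelliptic curve of genus 4 over F_p has an affine F_p-rational point for all primes p ≥ 53. -/
/-!
Stepanov's method. If `y² = f(x)` has no affine point then every `f(a)` is a non-square, so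
`f(a)^m = -1` for `m = (p - 1)/2`, i.e. `s = X^p - X` divides `f^m + 1`, say `s q₀ = f^m + 1`.
Since `s' = -1`, differentiating and multiplying by `2f` trades the huge power `f^m` for a
factor `2m + 1 = p = 0`: the twisted derivatives `q_{k+1} = 2 f q_k' - (2k - 1) f' q_k` satisfy
`s q_{k+1} = 2(k+1) f q_k + W_k`, where `W_k` is obtained from `f'` by the same operators, has
degree `8k + 8` and leading coefficient `9·7·5·⋯`. Each step lowers `deg q_k` by `p - 9`, so
`deg q₄ ≤ 31 - m`; then `10 f q₄ + W₄` has degree at most `40 < p` and coefficient `945` at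
`X⁴⁰`, yet is a multiple of `s`.
-/

open Polynomial

namespace Polynomial

variable {R : Type*} [CommRing R]

/-- `twistedDeriv f c U = 2 f^(c/2 + 1) (f^(-c/2) U)'`. -/
noncomputable def twistedDeriv (f : R[X]) (c : R) (U : R[X]) : R[X] :=
  2 * f * derivative U - C c * derivative f * U

noncomputable def twistedDerivSeq (f : R[X]) (c : R) (U : R[X]) : ℕ → R[X]
  | 0 => U
  | k + 1 => twistedDeriv f (c + 2 * k) (twistedDerivSeq f c U k)

section twistedDeriv

variable {f U V : R[X]} {c : R}

lemma twistedDeriv_add : twistedDeriv f c (U + V) = twistedDeriv f c U + twistedDeriv f c V := by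
  simp only [twistedDeriv, derivative_add]; ring

lemma twistedDeriv_C_mul (a : R) : twistedDeriv f c (C a * U) = C a * twistedDeriv f c U := by
  simp only [twistedDeriv, derivative_mul, derivative_C]; ring

lemma twistedDeriv_add_two_mul_self :
    twistedDeriv f (c + 2) (f * U) = f * twistedDeriv f c U := by
  simp only [twistedDeriv, derivative_mul, C_add, C_ofNat]; ring

lemma twistedDeriv_one : twistedDeriv f c 1 = -C c * derivative f := by
  simp [twistedDeriv]

lemma twistedDeriv_pow (m : ℕ) :
    twistedDeriv f c (f ^ m) = C (2 * m - c) * f ^ m * derivative f := by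
  rcases m with _ | m
  · simp [twistedDeriv]
  · rw [twistedDeriv, derivative_pow, add_tsub_cancel_right, C_sub, C_mul, C_ofNat,
      C_eq_natCast, pow_succ]
    push_cast
    ring

lemma twistedDeriv_pow_add_one {m : ℕ} (hchar : (2 * m + 1 : R) = 0) :
    twistedDeriv f (-1) (f ^ m + 1) = derivative f := by
  rw [twistedDeriv_add, twistedDeriv_pow, twistedDeriv_one, sub_neg_eq_add, hchar]
  simp

lemma mul_twistedDeriv_of_mul_eq {s q : R[X]} (hs : derivative s = -1) (h : s * q = V) :
    s * twistedDeriv f c q = 2 * f * q + twistedDeriv f c V := by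
  have h' := congrArg derivative h
  rw [derivative_mul, hs] at h'
  unfold twistedDeriv
  linear_combination (2 * f) * h' - C c * derivative f * h

lemma twistedDerivSeq_succ' (k : ℕ) :
    twistedDerivSeq f c U (k + 1) = twistedDerivSeq f (c + 2) (twistedDeriv f c U) k := by
  induction k with
  | zero => simp [twistedDerivSeq]
  | succ k ih =>
    rw [twistedDerivSeq, ih, twistedDerivSeq]
    push_cast
    ring_nf

lemma mul_twistedDerivSeq_succ {s q : R[X]} (hs : derivative s = -1) (h : s * q = V) (k : ℕ) :
    s * twistedDerivSeq f c q (k + 1) =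
      C (2 * (k + 1) : R) * f * twistedDerivSeq f c q k + twistedDerivSeq f c V (k + 1) := by
  induction k with
  | zero => simpa [twistedDerivSeq, C_ofNat] using mul_twistedDeriv_of_mul_eq hs h
  | succ k ih =>
    have hc : c + 2 * ((k + 1 : ℕ) : R) = c + 2 * k + 2 := by push_cast; ring
    have hstep : twistedDeriv f (c + 2 * k) (twistedDerivSeq f c q k) =
        twistedDerivSeq f c q (k + 1) := rfl
    rw [twistedDerivSeq, mul_twistedDeriv_of_mul_eq hs ih, twistedDeriv_add, mul_assoc (C _),
      twistedDeriv_C_mul, hc, twistedDeriv_add_two_mul_self, hstep, ← hc]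
    simp only [twistedDerivSeq, map_mul, map_add, map_natCast, map_one, C_ofNat]
    push_cast
    ring

lemma natDegree_twistedDeriv_le {d n : ℕ} (hf : f.natDegree ≤ d + 1)
    (hU : U.natDegree ≤ n + 1) :
    (twistedDeriv f c U).natDegree ≤ n + 1 + d := by
  have hU' : (derivative U).natDegree ≤ n := by
    have := natDegree_derivative_le U
    omega
  have hf' : (derivative f).natDegree ≤ d := by
    have := natDegree_derivative_le f
    omega
  refine (natDegree_sub_le _ _).trans (max_le ?_ ?_)
  · rw [mul_assoc, ← C_ofNat]
    refine (natDegree_C_mul_le _ _).trans ((natDegree_mul_le_of_le hf hU').trans ?_)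
    omega
  · rw [mul_assoc]
    refine (natDegree_C_mul_le _ _).trans ((natDegree_mul_le_of_le hf' hU).trans ?_)
    omega

lemma coeff_twistedDeriv {d n : ℕ} (hf : f.natDegree ≤ d + 1) (hlead : f.coeff (d + 1) = 1)
    (hU : U.natDegree ≤ n + 1) :
    (twistedDeriv f c U).coeff (n + 1 + d) = (2 * (n + 1) - c * (d + 1)) * U.coeff (n + 1) := by
  have hU' : (derivative U).natDegree ≤ n := by
    have := natDegree_derivative_le U
    omega
  have hf' : (derivative f).natDegree ≤ d := by
    have := natDegree_derivative_le f
    omega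
  rw [twistedDeriv, coeff_sub, mul_assoc, mul_assoc, ← C_ofNat, coeff_C_mul, coeff_C_mul,
    show n + 1 + d = (d + 1) + n by omega, coeff_mul_add_eq_of_natDegree_le hf hU',
    show d + 1 + n = d + (n + 1) by omega, coeff_mul_add_eq_of_natDegree_le hf' hU,
    coeff_derivative, coeff_derivative, hlead]
  ring

lemma natDegree_twistedDerivSeq_le {d n : ℕ} (hf : f.natDegree ≤ d + 1)
    (hU : U.natDegree ≤ n + 1) (k : ℕ) :
    (twistedDerivSeq f c U k).natDegree ≤ n + 1 + d * k := by
  induction k with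
  | zero => simpa [twistedDerivSeq] using hU
  | succ k ih =>
    have := natDegree_twistedDeriv_le (c := c + 2 * k) (n := n + d * k) hf (by linarith)
    rw [twistedDerivSeq]
    linarith [mul_add_one d k]

lemma coeff_twistedDerivSeq {d n : ℕ} (hf : f.natDegree ≤ d + 1) (hlead : f.coeff (d + 1) = 1)
    (hU : U.natDegree ≤ n + 1) (k : ℕ) :
    (twistedDerivSeq f c U k).coeff (n + 1 + d * k) =
      (∏ i ∈ Finset.range k, (2 * ((n + 1 + d * i : ℕ) : R) - (c + 2 * i) * (d + 1))) *
        U.coeff (n + 1) := by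
  induction k with
  | zero => simp [twistedDerivSeq]
  | succ k ih =>
    have hk := natDegree_twistedDerivSeq_le (c := c) hf hU k
    rw [show n + 1 + d * (k + 1) = n + d * k + 1 + d by ring, twistedDerivSeq,
      coeff_twistedDeriv hf hlead (by linarith), show n + d * k + 1 = n + 1 + d * k by ring, ih,
      Finset.prod_range_succ]
    push_cast
    ring

end twistedDeriv

lemma Monic.natDegree_le_sub_of_natDegree_mul_le {s Q : R[X]} (hs : s.Monic) {N : ℕ}
    (h : (s * Q).natDegree ≤ N) : Q.natDegree ≤ N - s.natDegree := by
  rcases eq_or_ne Q 0 with rfl | hQ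
  · simp
  rw [hs.natDegree_mul' hQ] at h
  omega

lemma natDegree_C_mul_mul_le (a : R) (f Q : R[X]) :
    (C a * f * Q).natDegree ≤ f.natDegree + Q.natDegree :=
  natDegree_mul_le_of_le (natDegree_C_mul_le a f) le_rfl

lemma Monic.natDegree_le_of_mul_eq_C_mul_mul_add {s Q Q' f W : R[X]} {a : R} (hs : s.Monic)
    (h : s * Q' = C a * f * Q + W) :
    Q'.natDegree ≤ max (f.natDegree + Q.natDegree) W.natDegree - s.natDegree := by
  refine hs.natDegree_le_sub_of_natDegree_mul_le ?_
  rw [h]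
  exact natDegree_add_le_of_le (natDegree_C_mul_mul_le a f Q) le_rfl

end Polynomial

namespace FiniteField

variable {K : Type*} [Field K] [Fintype K]

lemma derivative_X_pow_card_sub_X : derivative (X ^ Fintype.card K - X : K[X]) = -1 := by
  rw [derivative_sub, derivative_X, derivative_X_pow, Nat.cast_card_eq_zero K, C_0, zero_mul,
    zero_sub]

lemma X_pow_card_sub_X_dvd {g : K[X]} (hg : ∀ x, g.eval x = 0) :
    X ^ Fintype.card K - X ∣ g := by
  rcases eq_or_ne g 0 with rfl | hg0
  · exact dvd_zero _
  have hmonic : (X ^ Fintype.card K - X : K[X]).Monic :=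
    monic_X_pow_sub (by rw [degree_X]; exact_mod_cast Fintype.one_lt_card)
  have hcard : Multiset.card (X ^ Fintype.card K - X : K[X]).roots =
      (X ^ Fintype.card K - X : K[X]).natDegree := by
    rw [roots_X_pow_card_sub_X, X_pow_card_sub_X_natDegree_eq K Fintype.one_lt_card]
    rfl
  rw [← prod_multiset_X_sub_C_of_monic_of_roots_card_eq hmonic hcard,
    Multiset.prod_X_sub_C_dvd_iff_le_roots hg0, roots_X_pow_card_sub_X]
  exact (Multiset.le_iff_subset Finset.univ.nodup).mpr fun x _ => (mem_roots hg0).mpr (hg x)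

end FiniteField

namespace ZMod

lemma pow_div_two_eq_neg_one_of_not_isSquare {p : ℕ} [Fact p.Prime] {a : ZMod p}
    (ha : ¬IsSquare a) : a ^ (p / 2) = -1 := by
  have ha0 : a ≠ 0 := by
    rintro rfl
    exact ha IsSquare.zero
  exact (pow_div_two_eq_neg_one_or_one p ha0).resolve_left
    fun h => ha ((euler_criterion p ha0).mpr h)

end ZMod

lemma not_dvd_pow_add_one_of_natDegree_eq_nine {K : Type*} [Field K] {s f : K[X]} {m : ℕ}
    (hs : s.Monic) (hs_deriv : derivative s = -1) (hs_deg : s.natDegree = 2 * m + 1)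
    (hchar : (2 * m + 1 : K) = 0) (hm : 20 ≤ m) (h945 : (945 : K) ≠ 0)
    (hf : f.Monic) (hf_deg : f.natDegree = 9) : ¬s ∣ f ^ m + 1 := by
  rintro ⟨q, hq⟩
  have hlead : f.coeff (8 + 1) = 1 := by simpa [hf_deg] using hf.coeff_natDegree
  have hf_le : f.natDegree ≤ 8 + 1 := hf_deg.le
  set Q := twistedDerivSeq f (-1) q
  set W := twistedDerivSeq f 1 (derivative f)
  have hchain (k : ℕ) : s * Q (k + 1) = C (2 * (k + 1) : K) * f * Q k + W k := by
    rw [mul_twistedDerivSeq_succ hs_deriv hq.symm k, twistedDerivSeq_succ',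
      twistedDeriv_pow_add_one hchar, show (-1 + 2 : K) = 1 by norm_num]
  have hf' : (derivative f).natDegree ≤ 7 + 1 := (natDegree_derivative_le f).trans (by omega)
  have hW_deg (k : ℕ) : (W k).natDegree ≤ 8 + 8 * k := natDegree_twistedDerivSeq_le hf_le hf' k
  have hQ_succ (k : ℕ) :
      (Q (k + 1)).natDegree ≤ max (9 + (Q k).natDegree) (8 + 8 * k) - (2 * m + 1) := by
    have := hs.natDegree_le_of_mul_eq_C_mul_mul_add (hchain k)
    have := hW_deg k
    omega
  have hQ_zero : (Q 0).natDegree ≤ 9 * m - (2 * m + 1) := by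
    rw [← hs_deg]
    refine hs.natDegree_le_sub_of_natDegree_mul_le ?_
    rw [show s * Q 0 = f ^ m + 1 from hq.symm]
    refine (natDegree_add_le_of_le (natDegree_pow_le_of_le m hf_deg.le) natDegree_one.le).trans ?_
    omega
  -- `deg Q k ≤ (7 - 2k) m + 8k - 1` for `k ≤ 4`
  have hQ_four : (Q 4).natDegree ≤ 11 := by
    have h1 := hQ_succ 0
    have h2 := hQ_succ 1
    have h3 := hQ_succ 2
    have h4 := hQ_succ 3
    simp only [Nat.reduceAdd, Nat.reduceMul] at h1 h2 h3 h4
    omega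
  have hW_coeff : (W 4).coeff 40 = 945 := by
    have := coeff_twistedDerivSeq (c := 1) hf_le hlead hf' 4
    rw [coeff_derivative, hlead, Finset.prod_range_succ, Finset.prod_range_succ,
      Finset.prod_range_succ, Finset.prod_range_one] at this
    rw [this]
    norm_num
  have hP_zero : C (2 * (4 + 1) : K) * f * Q 4 + W 4 = 0 := by
    refine eq_zero_of_dvd_of_natDegree_lt ⟨Q 5, (hchain 4).symm⟩ ?_
    rw [hs_deg]
    have hfQ : f.natDegree + (Q 4).natDegree ≤ 40 := by omega
    exact (natDegree_add_le_of_le ((natDegree_C_mul_mul_le _ _ _).trans hfQ)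
      (hW_deg 4)).trans_lt (by omega)
  have hfQ_coeff : (C (2 * (4 + 1) : K) * f * Q 4).coeff 40 = 0 :=
    coeff_eq_zero_of_natDegree_lt ((natDegree_C_mul_mul_le _ _ _).trans_lt (by omega))
  have h40 := congrArg (coeff · 40) hP_zero
  simp only [coeff_add, hfQ_coeff, hW_coeff, coeff_zero, zero_add] at h40
  exact h945 h40

theorem genus_four_has_point_mitkin_general (p : ℕ) (hp : p.Prime) (hge : 53 ≤ p)
    (f : Polynomial (ZMod p)) (hmonic : f.Monic) (hdeg : f.natDegree = 9) :
    ∃ x y : ZMod p, y ^ 2 = f.eval x := by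
  have := Fact.mk hp
  by_contra! hnone
  have hp_odd : 2 * (p / 2) + 1 = p := by
    have := hp.eq_two_or_odd
    omega
  have hX_dvd : (X ^ p - X : (ZMod p)[X]) ∣ f ^ (p / 2) + 1 := by
    have hvanish (x : ZMod p) : (f ^ (p / 2) + 1).eval x = 0 := by
      have hns : ¬IsSquare (f.eval x) := fun ⟨y, hy⟩ => hnone x y (by rw [hy, sq])
      simp [ZMod.pow_div_two_eq_neg_one_of_not_isSquare hns]
    simpa only [ZMod.card] using FiniteField.X_pow_card_sub_X_dvd hvanish
  have h945 : (945 : ZMod p) ≠ 0 := by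
    rw [show (945 : ZMod p) = ((945 : ℕ) : ZMod p) by norm_cast, ne_eq, ZMod.natCast_eq_zero_iff]
    intro hdvd
    have := hp.dvd_factorial.mp (hdvd.trans (by norm_num [Nat.factorial] : 945 ∣ Nat.factorial 9))
    omega
  refine not_dvd_pow_add_one_of_natDegree_eq_nine (monic_X_pow_sub ?_) ?_ ?_ ?_ (by omega) h945
    hmonic hdeg hX_dvd
  · rw [degree_X]
    exact_mod_cast hp.one_lt
  · simpa [ZMod.card] using FiniteField.derivative_X_pow_card_sub_X (K := ZMod p)
  · rw [FiniteField.X_pow_card_sub_X_natDegree_eq _ hp.one_lt, hp_odd]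
  · have hp_zero : ((2 * (p / 2) + 1 : ℕ) : ZMod p) = 0 := by rw [hp_odd, ZMod.natCast_self]
    exact_mod_cast hp_zero

/-- (Via Mit'kin's bound.) Every hyperelliptic curve of genus 4, `y² = f(x)` with `f`
squarefree monic of degree 9 over `F_p`, has an affine `F_p`-rational point for every
prime `p ≥ 53`. -/
theorem genus_four_has_point_mitkin (p : ℕ) (hp : p.Prime) (hge : 53 ≤ p)
    (f : Polynomial (ZMod p)) (hmonic : f.Monic) (hdeg : f.natDegree = 9)
    (hsf : Squarefree f) :
    ∃ x y : ZMod p, y ^ 2 = f.eval x :=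
  genus_four_has_point_mitkin_general p hp hge f hmonic hdeg
end

section
/- For every squarefree polynomial f of degree 5 over F_13 there exists a point (x,y) ∈ F_13 × F_13 with y² = f(x); that is, every hyperelliptic curve of genus 2 over F_13 has an affine F_13-rational point. -/
private def etab : Fin 6 → ZMod 13 := ![4,6,1,12,7,9]

private def nrl : Fin 6 → ZMod 13 := ![2,5,6,7,8,11]

private def Ltab7 : Fin 7 → Fin 6 → ZMod 13 :=
  ![![12,6,11,7,11,6], ![7,9,7,1,8,8], ![5,3,6,11,11,4],
    ![9,3,8,8,3,9], ![4,11,11,6,3,5], ![8,8,1,7,9,7], ![6,11,7,11,6,12]]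

private lemma vand7 : ∀ (x : Fin 7) (k : Fin 6),
    ∑ i : Fin 6, Ltab7 x i * ((i : ℕ) : ZMod 13) ^ (k : ℕ)
      = (((x : ℕ) + 6 : ℕ) : ZMod 13) ^ (k : ℕ) := by decide

private lemma lead : ∀ k : Fin 6,
    ∑ i : Fin 6, etab i * ((i : ℕ) : ZMod 13) ^ (k : ℕ)
      = if (k : ℕ) = 5 then 1 else 0 := by decide

private lemma sqhelp : ∀ a : ZMod 13, (¬ ∃ y : ZMod 13, y ^ 2 = a) →
    ∃ e : ZMod 13, e ^ 2 * a = 2 := by decide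

private lemma nridx : ∀ a : ZMod 13, (¬ ∃ y : ZMod 13, y ^ 2 = a) →
    ∃ j : Fin 6, nrl j = a := by decide

private lemma czero : (((0 : Fin 6) : ℕ) : ZMod 13) = 0 := by decide
private lemma cone : (((1 : Fin 6) : ℕ) : ZMod 13) = 1 := by decide
private lemma ctwo : (((2 : Fin 6) : ℕ) : ZMod 13) = 2 := by decide
private lemma cthree : (((3 : Fin 6) : ℕ) : ZMod 13) = 3 := by decide
private lemma cfour : (((4 : Fin 6) : ℕ) : ZMod 13) = 4 := by decide
private lemma cfive : (((5 : Fin 6) : ℕ) : ZMod 13) = 5 := by decide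
private lemma two_ne : (0 : ZMod 13) ≠ 2 := by decide

private lemma sqmem : ∀ z : ZMod 13, z ∈ ([0,1,3,4,9,10,12] : List (ZMod 13)) →
    ∃ y : ZMod 13, y ^ 2 = z := by decide

set_option maxRecDepth 100000 in
set_option maxHeartbeats 4000000 in
private lemma core : ∀ a b c d g : Fin 6,
    etab 0 * 2 + etab 1 * nrl a + etab 2 * nrl b + etab 3 * nrl c + etab 4 * nrl d
      + etab 5 * nrl g ≠ 0 →
    ∃ x : Fin 7,
      Ltab7 x 0 * 2 + Ltab7 x 1 * nrl a + Ltab7 x 2 * nrl b + Ltab7 x 3 * nrl c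
        + Ltab7 x 4 * nrl d + Ltab7 x 5 * nrl g ∈ ([0,1,3,4,9,10,12] : List (ZMod 13)) := by
  decide

/-- Every hyperelliptic curve of genus 2 over `F_13`, `y² = f(x)` with `f` squarefree
of degree 5, has an affine `F_13`-rational point. -/
theorem genus_two_over_F13_has_point
    (f : Polynomial (ZMod 13)) (hdeg : f.natDegree = 5) (hsf : Squarefree f) :
    ∃ x y : ZMod 13, y ^ 2 = f.eval x := by
  haveI : Fact (Nat.Prime 13) := ⟨by norm_num⟩
  by_contra hcon
  push_neg at hcon
  have c0 := czero
  have c1 := cone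
  have c2 := ctwo
  have c3 := cthree
  have c4 := cfour
  have c5 := cfive
  have hvnr : ∀ i : Fin 6, ¬ ∃ y : ZMod 13, y ^ 2 = f.eval ((i : ℕ) : ZMod 13) := by
    rintro i ⟨y, hy⟩
    exact hcon _ y hy
  have hfe : ∀ z : ZMod 13, f.eval z = ∑ k : Fin 6, f.coeff (k : ℕ) * z ^ (k : ℕ) := by
    intro z
    rw [Polynomial.eval_eq_sum_range, hdeg]
    exact Finset.sum_range fun k => f.coeff k * z ^ k
  have hinterp : ∀ x : Fin 7,
      ∑ i : Fin 6, Ltab7 x i * f.eval ((i : ℕ) : ZMod 13)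
        = f.eval (((x : ℕ) + 6 : ℕ) : ZMod 13) := by
    intro x
    calc ∑ i : Fin 6, Ltab7 x i * f.eval ((i : ℕ) : ZMod 13)
        = ∑ i : Fin 6, ∑ k : Fin 6,
            f.coeff (k : ℕ) * (Ltab7 x i * ((i : ℕ) : ZMod 13) ^ (k : ℕ)) := by
          refine Finset.sum_congr rfl fun i _ => ?_
          rw [hfe ((i : ℕ) : ZMod 13), Finset.mul_sum]
          exact Finset.sum_congr rfl fun k _ => by ring
      _ = ∑ k : Fin 6, ∑ i : Fin 6,
            f.coeff (k : ℕ) * (Ltab7 x i * ((i : ℕ) : ZMod 13) ^ (k : ℕ)) := Finset.sum_comm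
      _ = ∑ k : Fin 6, f.coeff (k : ℕ) * (((x : ℕ) + 6 : ℕ) : ZMod 13) ^ (k : ℕ) := by
          refine Finset.sum_congr rfl fun k _ => ?_
          rw [← Finset.mul_sum, vand7 x k]
      _ = f.eval (((x : ℕ) + 6 : ℕ) : ZMod 13) := (hfe _).symm
  have hcoeff : ∑ i : Fin 6, etab i * f.eval ((i : ℕ) : ZMod 13) = f.coeff 5 := by
    calc ∑ i : Fin 6, etab i * f.eval ((i : ℕ) : ZMod 13)
        = ∑ i : Fin 6, ∑ k : Fin 6,
            f.coeff (k : ℕ) * (etab i * ((i : ℕ) : ZMod 13) ^ (k : ℕ)) := by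
          refine Finset.sum_congr rfl fun i _ => ?_
          rw [hfe ((i : ℕ) : ZMod 13), Finset.mul_sum]
          exact Finset.sum_congr rfl fun k _ => by ring
      _ = ∑ k : Fin 6, ∑ i : Fin 6,
            f.coeff (k : ℕ) * (etab i * ((i : ℕ) : ZMod 13) ^ (k : ℕ)) := Finset.sum_comm
      _ = ∑ k : Fin 6, f.coeff (k : ℕ) * (if (k : ℕ) = 5 then 1 else 0) := by
          refine Finset.sum_congr rfl fun k _ => ?_
          rw [← Finset.mul_sum, lead k]
      _ = f.coeff 5 := by
          simp [Fin.sum_univ_six, show ((3 : Fin 6) : ℕ) = 3 from rfl,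
            show ((4 : Fin 6) : ℕ) = 4 from rfl, show ((5 : Fin 6) : ℕ) = 5 from rfl]
  have hf0 : f ≠ 0 := fun h => by simp [h] at hdeg
  have hlc : f.coeff 5 ≠ 0 := by
    rw [← hdeg]
    show f.leadingCoeff ≠ 0
    exact Polynomial.leadingCoeff_ne_zero.mpr hf0
  obtain ⟨e, he⟩ := sqhelp _ (hvnr 0)
  rw [c0] at he
  have he0 : e ≠ 0 := by
    intro h
    rw [h] at he
    have h2 : (0 : ZMod 13) = 2 := by rw [← he]; ring
    exact two_ne h2
  have hwnr : ∀ i : Fin 6, ¬ ∃ y : ZMod 13, y ^ 2 = e ^ 2 * f.eval ((i : ℕ) : ZMod 13) := by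
    rintro i ⟨y, hy⟩
    refine hvnr i ⟨y * e⁻¹, ?_⟩
    rw [mul_pow, hy]
    field_simp
  obtain ⟨a, ha⟩ := nridx _ (hwnr 1)
  obtain ⟨b, hb⟩ := nridx _ (hwnr 2)
  obtain ⟨c, hc⟩ := nridx _ (hwnr 3)
  obtain ⟨d, hd⟩ := nridx _ (hwnr 4)
  obtain ⟨g, hg⟩ := nridx _ (hwnr 5)
  rw [c1] at ha
  rw [c2] at hb
  rw [c3] at hc
  rw [c4] at hd
  rw [c5] at hg
  have hlead : etab 0 * 2 + etab 1 * nrl a + etab 2 * nrl b + etab 3 * nrl c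
      + etab 4 * nrl d + etab 5 * nrl g ≠ 0 := by
    have hL : etab 0 * (e ^ 2 * f.eval 0) + etab 1 * (e ^ 2 * f.eval 1)
        + etab 2 * (e ^ 2 * f.eval 2) + etab 3 * (e ^ 2 * f.eval 3)
        + etab 4 * (e ^ 2 * f.eval 4) + etab 5 * (e ^ 2 * f.eval 5)
        = e ^ 2 * ∑ i : Fin 6, etab i * f.eval ((i : ℕ) : ZMod 13) := by
      rw [Fin.sum_univ_six, c0, c1, c2, c3, c4, c5]
      ring
    rw [ha, hb, hc, hd, hg]
    nth_rewrite 1 [← he]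
    rw [hL, hcoeff]
    exact mul_ne_zero (pow_ne_zero 2 he0) hlc
  obtain ⟨x, hx⟩ := core a b c d g hlead
  obtain ⟨y, hy⟩ := sqmem _ hx
  have hval : y ^ 2 = e ^ 2 * f.eval (((x : ℕ) + 6 : ℕ) : ZMod 13) := by
    have hR : Ltab7 x 0 * (e ^ 2 * f.eval 0) + Ltab7 x 1 * (e ^ 2 * f.eval 1)
        + Ltab7 x 2 * (e ^ 2 * f.eval 2) + Ltab7 x 3 * (e ^ 2 * f.eval 3)
        + Ltab7 x 4 * (e ^ 2 * f.eval 4) + Ltab7 x 5 * (e ^ 2 * f.eval 5)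
        = e ^ 2 * ∑ i : Fin 6, Ltab7 x i * f.eval ((i : ℕ) : ZMod 13) := by
      rw [Fin.sum_univ_six, c0, c1, c2, c3, c4, c5]
      ring
    rw [hy, ha, hb, hc, hd, hg]
    nth_rewrite 1 [← he]
    rw [hR, hinterp]
  refine hcon (((x : ℕ) + 6 : ℕ) : ZMod 13) (y * e⁻¹) ?_
  rw [mul_pow, hval]
  field_simp
end

section
/- There exists a squarefree polynomial f of degree 3 over F_3 such that the equation y² = f(x) has no solutions (x,y) ∈ F_3 × F_3; that is, there is a genus 1 curve in the family over F_3 with no affine F_3-rational point. -/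
open Polynomial

private lemma f3_eval : ∀ x : ZMod 3, (X ^ 3 + 2 * X + 2 : (ZMod 3)[X]).eval x = 2 := by
  intro x
  simp only [eval_add, eval_mul, eval_pow, eval_X, eval_ofNat]
  revert x; decide

/-- There is a genus-1 curve `y² = f(x)` with `f` squarefree of degree 3 over `F_3`
having no affine `F_3`-rational point. -/
theorem pointless_genus_one_example_over_F3 :
    ∃ f : Polynomial (ZMod 3), Squarefree f ∧ f.natDegree = 3 ∧
      ∀ x y : ZMod 3, y ^ 2 ≠ f.eval x := by
  refine ⟨X ^ 3 + 2 * X + 2, ?_, ?_, ?_⟩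
  · have hm : (X ^ 3 + 2 * X + 2 : (ZMod 3)[X]).Monic := by
      monicity!
    have hd : (X ^ 3 + 2 * X + 2 : (ZMod 3)[X]).natDegree = 3 := by
      compute_degree!
    have hirr : Irreducible (X ^ 3 + 2 * X + 2 : (ZMod 3)[X]) := by
      rw [hm.irreducible_iff_roots_eq_zero_of_degree_le_three (by omega) (by omega)]
      refine Multiset.eq_zero_of_forall_notMem fun x hx => ?_
      rw [mem_roots (hm.ne_zero)] at hx
      have := f3_eval x
      rw [hx] at this
      exact (by decide : (0 : ZMod 3) ≠ 2) this
    exact hirr.squarefree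
  · compute_degree!
  · intro x y h
    rw [f3_eval x] at h
    revert h; revert y; decide
end
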